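/- arXiv:2109.14474 — 2 statements merged into one kernel-verified Lean document; each statement's English description precedes it below -/
import Mathlib

section
/- Let X be a bounded random vector with values in ℝ^k such that E[XX'] is positive definite. Then there exist positive constants c₁ and c₂, not depending on u, such that for every vector u ∈ ℝ^k with ‖u‖ = 1, P(|X'u| > c₁) > c₂. -/
open MeasureTheory ProbabilityTheory Filter Topology
open scoped ENNReal NNReal BigOperators

noncomputable section

/-- Euclidean space ℝ^n. -/
abbrev Vec (n : ℕ) := EuclideanSpace ℝ (Fin n)

/-- Euclidean dot product `x'y`. -/
def dot {n : ℕ} (x y : Vec n) : ℝ := ∑ i, x i * y i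

/-- Parameter θ = (β, γ, ψ). -/
abbrev Param (p1 p2 q : ℕ) := Vec p1 × Vec p2 × Vec q

/-- Covariates W = (Z, U, V, X). -/
abbrev Cov (p1 p2 q : ℕ) := Vec p1 × Vec p2 × ℝ × Vec q

variable {p1 p2 q : ℕ}

/-- η(W,θ) = Z'β + U'γ·1{V + X'ψ ≥ 0}. -/
def eta (θ : Param p1 p2 q) (w : Cov p1 p2 q) : ℝ :=
  dot w.1 θ.1 + dot w.2.1 θ.2.1 * (if 0 ≤ w.2.2.1 + dot w.2.2.2 θ.2.2 then 1 else 0)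

/-- Smoothed index ηₙ(W,θ) = Z'β + U'γ·K((V + X'ψ)/h). -/
def etaS (K : ℝ → ℝ) (h : ℝ) (θ : Param p1 p2 q) (w : Cov p1 p2 q) : ℝ :=
  dot w.1 θ.1 + dot w.2.1 θ.2.1 * K ((w.2.2.1 + dot w.2.2.2 θ.2.2) / h)

/-- `f` is a conditional density (w.r.t. Lebesgue measure) of the real random variable `T`
given the random element `W`. -/
def IsCondDensity {Ω E : Type*} [MeasurableSpace Ω] [MeasurableSpace E]
    (P : Measure Ω) (T : Ω → ℝ) (W : Ω → E) (f : ℝ → E → ℝ) : Prop :=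
  ∀ s : Set ℝ, MeasurableSet s →
    (fun ω => ∫ t in s, f t (W ω)) =ᵐ[P]
      P[fun ω => s.indicator (fun _ => (1:ℝ)) (T ω) | MeasurableSpace.comap W inferInstance]

/-- Cumulative hazard Λ(t) = ∫₀ᵗ λ(u) du. -/
def Lam (lam : ℝ → ℝ) (t : ℝ) : ℝ := ∫ u in (0:ℝ)..t, lam u

/-- The Cox-model conditional density of T° given W = w, under parameter (θ, λ). -/
def coxDensity (lam : ℝ → ℝ) (θ : Param p1 p2 q) (t : ℝ) (w : Cov p1 p2 q) : ℝ :=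
  lam t * Real.exp (eta θ w) * Real.exp (-(Real.exp (eta θ w)) * Lam lam t)

/-!
Since `‖X‖ ≤ B`, for a unit vector `u` we have `E[(X'u)²] ≤ c² + B² P(|X'u| > c)`. The map
`u ↦ E[(X'u)²]` is continuous and positive on the compact unit sphere, hence bounded below there
by some `m > 0`; with `c² = m / 2` this gives `P(|X'u| > c) ≥ m / (2 B²)` uniformly in `u`.
-/

lemma dot_eq_inner {n : ℕ} (x y : Vec n) : dot x y = inner ℝ x y := by
  simp [dot, PiLp.inner_apply, mul_comm]

lemma abs_dot_le_of_norm_eq_one {n : ℕ} (x : Vec n) {u : Vec n} (hu : ‖u‖ = 1) :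
    |dot x u| ≤ ‖x‖ := by
  simpa [dot_eq_inner, hu] using abs_real_inner_le_norm x u

theorem integral_sq_le_sq_add_mul_measureReal {Ω : Type*} [MeasurableSpace Ω] {P : Measure Ω}
    [IsProbabilityMeasure P] {Y : Ω → ℝ} (hY : Measurable Y) {B : ℝ} (hYB : ∀ ω, |Y ω| ≤ B)
    (c : ℝ) : ∫ ω, Y ω ^ 2 ∂P ≤ c ^ 2 + B ^ 2 * P.real {ω | c < |Y ω|} := by
  have hA : MeasurableSet {ω | c < |Y ω|} := measurableSet_lt measurable_const hY.abs
  have hY2 : Integrable (fun ω => Y ω ^ 2) P := by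
    refine (integrable_const (B ^ 2)).mono' (hY.pow_const 2).aestronglyMeasurable
      (ae_of_all _ fun ω => ?_)
    rw [Real.norm_eq_abs, abs_pow]
    exact pow_le_pow_left₀ (abs_nonneg _) (hYB ω) 2
  have hind : Integrable ({ω | c < |Y ω|}.indicator fun _ => B ^ 2) P :=
    (integrable_const _).indicator hA
  have hpt (ω : Ω) : Y ω ^ 2 ≤ c ^ 2 + {ω | c < |Y ω|}.indicator (fun _ => B ^ 2) ω := by
    rw [Set.indicator_apply, ← sq_abs]
    split_ifs with hcY
    · nlinarith [abs_nonneg (Y ω), hYB ω, sq_nonneg c]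
    · have hYc : |Y ω| ≤ c := le_of_not_gt hcY
      nlinarith [abs_nonneg (Y ω)]
  calc ∫ ω, Y ω ^ 2 ∂P
      ≤ ∫ ω, (c ^ 2 + {ω | c < |Y ω|}.indicator (fun _ => B ^ 2) ω) ∂P :=
        integral_mono hY2 ((integrable_const _).add hind) hpt
    _ = c ^ 2 + B ^ 2 * P.real {ω | c < |Y ω|} := by
        rw [integral_add (integrable_const _) hind, integral_const, integral_indicator_const _ hA]
        simp [mul_comm]

theorem continuousOn_integral_dot_sq {n : ℕ} {Ω : Type*} [MeasurableSpace Ω] {P : Measure Ω}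
    [IsFiniteMeasure P] {X : Ω → Vec n} (hX : Measurable X) {M : ℝ} (hXM : ∀ ω, ‖X ω‖ ≤ M) :
    ContinuousOn (fun u => ∫ ω, dot (X ω) u ^ 2 ∂P) (Metric.sphere 0 1) := by
  simp only [dot_eq_inner]
  refine continuousOn_of_dominated (bound := fun _ => M ^ 2)
    (fun u _ => ((hX.inner measurable_const).pow_const 2).aestronglyMeasurable)
    (fun u hu => ae_of_all _ fun ω => ?_) (integrable_const _)
    (ae_of_all _ fun ω => (continuous_const.inner continuous_id).pow 2 |>.continuousOn)
  have hu : ‖u‖ = 1 := by simpa using hu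
  rw [Real.norm_eq_abs, abs_pow, ← dot_eq_inner]
  exact pow_le_pow_left₀ (abs_nonneg _) ((abs_dot_le_of_norm_eq_one _ hu).trans (hXM ω)) 2

theorem paley_zygmund_lower_bound {k : ℕ}
    {Ω : Type*} [MeasurableSpace Ω]
    (P : Measure Ω) [IsProbabilityMeasure P]
    (X : Ω → Vec k) (hXm : Measurable X)
    (hXbdd : ∃ M : ℝ, ∀ ω, ‖X ω‖ ≤ M)
    (hpos : ∀ u : Vec k, u ≠ 0 → 0 < ∫ ω, (dot (X ω) u) ^ 2 ∂P) :
    ∃ c₁ > (0:ℝ), ∃ c₂ > (0:ℝ), ∀ u : Vec k, ‖u‖ = 1 →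
      ENNReal.ofReal c₂ < P {ω | c₁ < |dot (X ω) u|} := by
  obtain ⟨M, hM⟩ := hXbdd
  set B := max M 1
  have hB : 0 < B := lt_max_of_lt_right one_pos
  have hXB (ω : Ω) : ‖X ω‖ ≤ B := (hM ω).trans (le_max_left M 1)
  obtain ⟨m, hm, hmin⟩ := (isCompact_sphere (0 : Vec k) 1).exists_forall_le'
    (continuousOn_integral_dot_sq hXm hXB)
    fun u hu => hpos u (ne_zero_of_mem_unit_sphere ⟨u, hu⟩)
  refine ⟨√(m / 2), by positivity, m / (4 * B ^ 2), by positivity, fun u hu => ?_⟩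
  have hY : Measurable fun ω => dot (X ω) u := by
    simpa only [dot_eq_inner] using hXm.inner measurable_const
  have hbound := integral_sq_le_sq_add_mul_measureReal (P := P) hY
    (fun ω => (abs_dot_le_of_norm_eq_one _ hu).trans (hXB ω)) √(m / 2)
  rw [Real.sq_sqrt (by positivity)] at hbound
  have hmu := hmin u (by simpa using hu)
  rw [ENNReal.ofReal_lt_iff_lt_toReal (by positivity) (measure_ne_top _ _),
    div_lt_iff₀ (by positivity), ← measureReal_def]
  nlinarith
end
end

section
/- Let K: ℝ → ℝ be differentiable. (i) If lim_{s→−∞} K(s) = 0 and lim_{s→−∞} s²K'(s) = 0, then lim_{s→−∞} s·K(s) = 0. (ii) If lim_{s→∞} K(s) = 1 and lim_{s→∞} s²K'(s) = 0, then lim_{s→∞} s·(1 − K(s)) = 0. -/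
open MeasureTheory ProbabilityTheory Filter Topology
open scoped ENNReal NNReal BigOperators

noncomputable section

variable {p1 p2 q : ℕ}

theorem kernel_tail_limits (K : ℝ → ℝ) (hKdiff : Differentiable ℝ K) :
    (Tendsto K atBot (𝓝 0) → Tendsto (fun s => s ^ 2 * deriv K s) atBot (𝓝 0) →
      Tendsto (fun s => s * K s) atBot (𝓝 0)) ∧
    (Tendsto K atTop (𝓝 1) → Tendsto (fun s => s ^ 2 * deriv K s) atTop (𝓝 0) →
      Tendsto (fun s => s * (1 - K s)) atTop (𝓝 0)) := by
  constructor
  · intro hK0 hK'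
    have h := HasDerivAt.lhopital_zero_atBot (f := K) (f' := deriv K)
      (g := fun x : ℝ => x⁻¹) (g' := fun x : ℝ => -(x ^ 2)⁻¹)
      (Eventually.of_forall fun x => (hKdiff x).hasDerivAt)
      (eventually_atBot.2 ⟨-1, fun x hx => hasDerivAt_inv (by linarith)⟩)
      (eventually_atBot.2 ⟨-1, fun x hx => by
        have : x ≠ 0 := by linarith
        simp [pow_ne_zero, this]⟩)
      hK0 (by
        have := (tendsto_inv_atTop_zero.comp (tendsto_neg_atBot_atTop : Tendsto (fun x : ℝ => -x) atBot atTop)).neg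
        simpa [Function.comp, inv_neg] using this)
      (by
        have : (fun x : ℝ => deriv K x / -(x ^ 2)⁻¹) =ᶠ[atBot]
            (fun x : ℝ => -(x ^ 2 * deriv K x)) := by
          filter_upwards [eventually_atBot.2 ⟨-1, fun x (hx : x ≤ -1) => hx⟩] with x hx
          have hx0 : x ≠ 0 := by linarith
          field_simp
        rw [tendsto_congr' this]
        simpa using hK'.neg)
    have heq : (fun x : ℝ => K x / x⁻¹) =ᶠ[atBot] (fun x : ℝ => x * K x) := by
      filter_upwards [eventually_atBot.2 ⟨-1, fun x (hx : x ≤ -1) => hx⟩] with x hx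
      have hx0 : x ≠ 0 := by linarith
      field_simp
    rwa [tendsto_congr' heq] at h
  · intro hK1 hK'
    have h := HasDerivAt.lhopital_zero_atTop (f := fun x => 1 - K x)
      (f' := fun x => -deriv K x)
      (g := fun x : ℝ => x⁻¹) (g' := fun x : ℝ => -(x ^ 2)⁻¹)
      (Eventually.of_forall fun x => ((hKdiff x).hasDerivAt.const_sub 1))
      (eventually_atTop.2 ⟨1, fun x hx => hasDerivAt_inv (by linarith)⟩)
      (eventually_atTop.2 ⟨1, fun x hx => by
        have : x ≠ 0 := by linarith
        simp [pow_ne_zero, this]⟩)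
      (by simpa using (hK1.const_sub 1)) tendsto_inv_atTop_zero
      (by
        have : (fun x : ℝ => -deriv K x / -(x ^ 2)⁻¹) =ᶠ[atTop]
            (fun x : ℝ => x ^ 2 * deriv K x) := by
          filter_upwards [eventually_atTop.2 ⟨1, fun x (hx : 1 ≤ x) => hx⟩] with x hx
          have hx0 : x ≠ 0 := by linarith
          field_simp
        rw [tendsto_congr' this]
        exact hK')
    have heq : (fun x : ℝ => (1 - K x) / x⁻¹) =ᶠ[atTop] (fun x : ℝ => x * (1 - K x)) := by
      filter_upwards [eventually_atTop.2 ⟨1, fun x (hx : 1 ≤ x) => hx⟩] with x hx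
      have hx0 : x ≠ 0 := by linarith
      field_simp
    rwa [tendsto_congr' heq] at h
end
end
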